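/- arXiv:1701.02261 — 3 statements merged into one kernel-verified Lean document; each statement's English description precedes it below -/
import Mathlib

section
/- Let s > 0 and r ≥ 0. The Lebesgue area of the intersection of the square S₀(s) = [−s/2, s/2] × [−s/2, s/2] with the closed ball B(0,r) is: ν₂(S₀(s) ∩ B(0,r)) = π r² if 0 ≤ r ≤ s/2; ν₂(S₀(s) ∩ B(0,r)) = π r² − 4 r² · arccos(s/(2r)) + s·√(4r² − s²) if s/2 ≤ r ≤ s/√2; and ν₂(S₀(s) ∩ B(0,r)) = s² if r ≥ s/√2. -/
open MeasureTheory Real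

def square (s : ℝ) : Set (EuclideanSpace ℝ (Fin 2)) :=
  {u | u 0 ∈ Set.Icc (-(s / 2)) (s / 2) ∧ u 1 ∈ Set.Icc (-(s / 2)) (s / 2)}

/-!
Cut `S₀(s) ∩ B(0, r)` by vertical lines: for `|x| ≤ s/2 ≤ r` the section is the segment
`|y| ≤ min (s/2) √(r² - x²)`, so by Fubini the area is `∫_{-s/2}^{s/2} 2 min (s/2) √(r² - x²) dx`.
When moreover `r ≤ s/√2`, the minimum is `s/2` exactly for `|x| ≤ c := √(r² - s²/4)`, and on the
two remaining pieces the integrand has the antiderivative `(x √(r² - x²) + r² arcsin (x/r)) / 2`.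
For `r ≤ s/2` the ball lies in the square and for `r ≥ s/√2` the square lies in the ball.
-/

open Set Metric

theorem volume_region_between_cc {α : Type*} [MeasurableSpace α] {μ : Measure α} [SFinite μ]
    {f g : α → ℝ} (hf : Measurable f) (hg : Measurable g) {s : Set α} (hs : MeasurableSet s) :
    μ.prod volume {p : α × ℝ | p.1 ∈ s ∧ p.2 ∈ Icc (f p.1) (g p.1)} =
      ∫⁻ x in s, ENNReal.ofReal (g x - f x) ∂μ := by
  rw [Measure.prod_apply (measurableSet_region_between_cc hf hg hs), ← lintegral_indicator hs]
  refine lintegral_congr fun x => ?_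
  by_cases hx : x ∈ s
  · have hslice : Prod.mk x ⁻¹' {p : α × ℝ | p.1 ∈ s ∧ p.2 ∈ Icc (f p.1) (g p.1)} =
        Icc (f x) (g x) := by
      ext; simp [hx]
    rw [indicator_of_mem hx, hslice, Real.volume_Icc]
  · simp [hx]

theorem mem_Icc_min_sqrt_iff {a r x y : ℝ} (hx : x ^ 2 ≤ r ^ 2) :
    y ∈ Icc (-min a √(r ^ 2 - x ^ 2)) (min a √(r ^ 2 - x ^ 2)) ↔
      y ∈ Icc (-a) a ∧ x ^ 2 + y ^ 2 ≤ r ^ 2 := by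
  rw [← le_sub_iff_add_le', Real.sq_le (sub_nonneg.2 hx)]
  simp only [mem_Icc, le_min_iff, ← max_neg_neg, max_le_iff]
  tauto

noncomputable def circleAntideriv (r x : ℝ) : ℝ :=
  (x * √(r ^ 2 - x ^ 2) + r ^ 2 * arcsin (x / r)) / 2

theorem circleAntideriv_neg (r x : ℝ) : circleAntideriv r (-x) = -circleAntideriv r x := by
  simp only [circleAntideriv, neg_sq, neg_div, arcsin_neg]
  ring

theorem hasDerivAt_circleAntideriv {r x : ℝ} (hr : 0 < r) (hx : x ∈ Ioo (-r) r) :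
    HasDerivAt (circleAntideriv r) √(r ^ 2 - x ^ 2) x := by
  have hpos : 0 < r ^ 2 - x ^ 2 := by nlinarith [hx.1, hx.2]
  have hx₁ : x / r ≠ -1 := by
    rw [ne_eq, div_eq_iff hr.ne']; linarith [hx.1]
  have hx₂ : x / r ≠ 1 := by
    rw [ne_eq, div_eq_iff hr.ne']; linarith [hx.2]
  have hsqrt : HasDerivAt (fun x => √(r ^ 2 - x ^ 2)) (-x / √(r ^ 2 - x ^ 2)) x := by
    convert ((hasDerivAt_pow 2 x).const_sub (r ^ 2)).sqrt hpos.ne' using 1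
    ring
  have harcsin := (hasDerivAt_arcsin hx₁ hx₂).comp x ((hasDerivAt_id x).div_const r)
  have hsum := (((hasDerivAt_id x).mul hsqrt).add (harcsin.const_mul (r ^ 2))).div_const 2
  refine hsum.congr_deriv ?_
  have hscale : √(1 - (x / r) ^ 2) = √(r ^ 2 - x ^ 2) / r := by
    rw [show 1 - (x / r) ^ 2 = (r ^ 2 - x ^ 2) / r ^ 2 by field_simp,
      sqrt_div hpos.le, sqrt_sq hr.le]
  have hsq : √(r ^ 2 - x ^ 2) ^ 2 = r ^ 2 - x ^ 2 := sq_sqrt hpos.le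
  rw [hscale, id]
  field_simp
  linear_combination -hsq

theorem integral_sqrt_sq_sub_sq {r a b : ℝ} (hr : 0 < r) (ha : -r ≤ a) (hab : a ≤ b)
    (hb : b ≤ r) :
    ∫ x in a..b, √(r ^ 2 - x ^ 2) = circleAntideriv r b - circleAntideriv r a := by
  refine intervalIntegral.integral_eq_sub_of_hasDerivAt_of_le hab ?_
    (fun x hx => hasDerivAt_circleAntideriv hr ⟨ha.trans_lt hx.1, hx.2.trans_le hb⟩)
    ((by fun_prop : Continuous fun x => √(r ^ 2 - x ^ 2)).intervalIntegrable _ _)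
  unfold circleAntideriv
  fun_prop

theorem min_sqrt_sq_sub_sq_eq_left {a r x : ℝ} (ha : 0 ≤ a) (hx : x ^ 2 ≤ r ^ 2 - a ^ 2) :
    min a √(r ^ 2 - x ^ 2) = a :=
  min_eq_left ((le_sqrt ha (by nlinarith)).2 (by linarith))

theorem min_sqrt_sq_sub_sq_eq_right {a r x : ℝ} (ha : 0 ≤ a) (hx : r ^ 2 - a ^ 2 ≤ x ^ 2) :
    min a √(r ^ 2 - x ^ 2) = √(r ^ 2 - x ^ 2) :=
  min_eq_right ((sqrt_le_left ha).2 (by linarith))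

theorem integral_two_mul_min_sqrt_sq_sub_sq {a r : ℝ} (ha : 0 < a) (har : a ≤ r)
    (hra : r ^ 2 ≤ 2 * a ^ 2) :
    ∫ x in -a..a, 2 * min a √(r ^ 2 - x ^ 2) =
      π * r ^ 2 - 4 * r ^ 2 * arccos (a / r) + 4 * a * √(r ^ 2 - a ^ 2) := by
  have hr : 0 < r := ha.trans_le har
  set c := √(r ^ 2 - a ^ 2) with hc
  have hc0 : 0 ≤ c := sqrt_nonneg _
  have hc2 : c ^ 2 = r ^ 2 - a ^ 2 := sq_sqrt (by nlinarith)
  have hca : c ≤ a := by nlinarith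
  have houter (u v : ℝ) (hu : -r ≤ u) (huv : u ≤ v) (hv : v ≤ r)
      (hx : ∀ x ∈ Icc u v, c ^ 2 ≤ x ^ 2) :
      ∫ x in u..v, 2 * min a √(r ^ 2 - x ^ 2) =
        2 * (circleAntideriv r v - circleAntideriv r u) := by
    rw [← integral_sqrt_sq_sub_sq hr hu huv hv, ← intervalIntegral.integral_const_mul]
    refine intervalIntegral.integral_congr fun x hx' => ?_
    rw [uIcc_of_le huv] at hx'
    simp only [min_sqrt_sq_sub_sq_eq_right ha.le (hc2 ▸ hx x hx')]
  have hinner : ∫ x in -c..c, 2 * min a √(r ^ 2 - x ^ 2) = 4 * a * c := by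
    rw [intervalIntegral.integral_congr (g := fun _ => 2 * a), intervalIntegral.integral_const,
      smul_eq_mul]
    · ring
    intro x hx
    rw [uIcc_of_le (by linarith)] at hx
    simp only [min_sqrt_sq_sub_sq_eq_left ha.le (hc2 ▸ sq_le_sq' hx.1 hx.2)]
  have hcont : Continuous fun x => 2 * min a √(r ^ 2 - x ^ 2) := by fun_prop
  have hsplit : ∫ x in -a..a, 2 * min a √(r ^ 2 - x ^ 2) =
      (∫ x in -a..-c, 2 * min a √(r ^ 2 - x ^ 2)) + (∫ x in -c..c, 2 * min a √(r ^ 2 - x ^ 2)) +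
        ∫ x in c..a, 2 * min a √(r ^ 2 - x ^ 2) := by
    rw [intervalIntegral.integral_add_adjacent_intervals,
      intervalIntegral.integral_add_adjacent_intervals] <;> exact hcont.intervalIntegrable _ _
  rw [hsplit,
    houter (-a) (-c) (by linarith) (by linarith) (by linarith) (fun x hx => by nlinarith [hx.2]),
    hinner, houter c a (by linarith) hca har (fun x hx => by nlinarith [hx.1]),
    circleAntideriv_neg, circleAntideriv_neg]
  have hac : √(r ^ 2 - c ^ 2) = a := by rw [hc2, sub_sub_cancel, sqrt_sq ha.le]
  have harccos : arccos (a / r) = arcsin (c / r) := by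
    rw [arccos_eq_arcsin (by positivity)]
    congr 1
    rw [show 1 - (a / r) ^ 2 = (r ^ 2 - a ^ 2) / r ^ 2 by field_simp, sqrt_div (by nlinarith),
      sqrt_sq hr.le]
  simp only [circleAntideriv, hac, ← hc, ← harccos, arcsin_eq_pi_div_two_sub_arccos (a / r)]
  ring

noncomputable def euclideanFinTwoEquivProd : EuclideanSpace ℝ (Fin 2) ≃ᵐ ℝ × ℝ :=
  (MeasurableEquiv.toLp 2 (Fin 2 → ℝ)).symm.trans MeasurableEquiv.finTwoArrow

theorem euclideanFinTwoEquivProd_apply (u : EuclideanSpace ℝ (Fin 2)) :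
    euclideanFinTwoEquivProd u = (u 0, u 1) := rfl

theorem measurePreserving_euclideanFinTwoEquivProd :
    MeasurePreserving euclideanFinTwoEquivProd :=
  (EuclideanSpace.volume_preserving_symm_measurableEquiv_toLp (Fin 2)).trans
    (volume_preserving_finTwoArrow ℝ)

theorem square_eq_preimage (s : ℝ) :
    square s = euclideanFinTwoEquivProd ⁻¹' (Icc (-(s / 2)) (s / 2) ×ˢ Icc (-(s / 2)) (s / 2)) :=
  rfl

theorem volume_square {s : ℝ} (hs : 0 ≤ s) : volume (square s) = ENNReal.ofReal (s ^ 2) := by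
  rw [square_eq_preimage, measurePreserving_euclideanFinTwoEquivProd.measure_preimage_equiv,
    Measure.volume_eq_prod, Measure.prod_prod, Real.volume_Icc, ← ENNReal.ofReal_mul (by linarith)]
  ring_nf

theorem closedBall_subset_square {s r : ℝ} (h : r ≤ s / 2) :
    closedBall (0 : EuclideanSpace ℝ (Fin 2)) r ⊆ square s := by
  intro u hu
  have hcoord (i : Fin 2) : u i ∈ Icc (-(s / 2)) (s / 2) :=
    abs_le.1 ((PiLp.norm_apply_le u i).trans ((mem_closedBall_zero_iff.1 hu).trans h))
  exact ⟨hcoord 0, hcoord 1⟩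

theorem square_subset_closedBall {s r : ℝ} (hr : 0 ≤ r) (h : s ^ 2 ≤ 2 * r ^ 2) :
    square s ⊆ closedBall (0 : EuclideanSpace ℝ (Fin 2)) r := by
  rintro u ⟨h₀, h₁⟩
  rw [EuclideanSpace.closedBall_zero_eq r hr, mem_ofPred_eq, Fin.sum_univ_two]
  nlinarith [sq_le_sq' h₀.1 h₀.2, sq_le_sq' h₁.1 h₁.2]

theorem square_inter_closedBall_eq_preimage {s r : ℝ} (hs : 0 ≤ s) (h : s / 2 ≤ r) :
    square s ∩ closedBall 0 r = euclideanFinTwoEquivProd ⁻¹'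
      {p | p.1 ∈ Icc (-(s / 2)) (s / 2) ∧
        p.2 ∈ Icc (-min (s / 2) √(r ^ 2 - p.1 ^ 2)) (min (s / 2) √(r ^ 2 - p.1 ^ 2))} := by
  ext u
  rw [EuclideanSpace.closedBall_zero_eq r (by linarith)]
  simp only [square, mem_inter_iff, mem_ofPred_eq, mem_preimage, euclideanFinTwoEquivProd_apply,
    Fin.sum_univ_two]
  constructor
  · rintro ⟨⟨hx, hy⟩, hxy⟩
    exact ⟨hx, (mem_Icc_min_sqrt_iff (sq_le_sq' (by linarith [hx.1]) (by linarith [hx.2]))).2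
      ⟨hy, hxy⟩⟩
  · rintro ⟨hx, hy⟩
    have := (mem_Icc_min_sqrt_iff (sq_le_sq' (by linarith [hx.1]) (by linarith [hx.2]))).1 hy
    exact ⟨⟨hx, this.1⟩, this.2⟩

theorem volume_square_inter_closedBall {s r : ℝ} (hs : 0 ≤ s) (h : s / 2 ≤ r) :
    volume (square s ∩ closedBall 0 r) =
      ENNReal.ofReal (∫ x in -(s / 2)..s / 2, 2 * min (s / 2) √(r ^ 2 - x ^ 2)) := by
  have hcont : Continuous fun x : ℝ => 2 * min (s / 2) √(r ^ 2 - x ^ 2) := by fun_prop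
  rw [square_inter_closedBall_eq_preimage hs h,
    measurePreserving_euclideanFinTwoEquivProd.measure_preimage_equiv, Measure.volume_eq_prod,
    volume_region_between_cc (f := fun x => -min (s / 2) √(r ^ 2 - x ^ 2))
      (g := fun x => min (s / 2) √(r ^ 2 - x ^ 2)) (by fun_prop) (by fun_prop) measurableSet_Icc,
    intervalIntegral.integral_of_le (by linarith), ← integral_Icc_eq_integral_Ioc,
    ofReal_integral_eq_lintegral_ofReal hcont.integrableOn_Icc
      (.of_forall fun x => by positivity)]
  simp only [sub_neg_eq_add, ← two_mul]

/-- the Lebesgue area of `S₀(s) ∩ B(0,r)`. -/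
theorem area_square_inter_ball (s r : ℝ) (hs : 0 < s) (hr : 0 ≤ r) :
    (r ≤ s / 2 →
      volume (square s ∩ Metric.closedBall (0 : EuclideanSpace ℝ (Fin 2)) r)
        = ENNReal.ofReal (π * r ^ 2)) ∧
    (s / 2 ≤ r → r ≤ s / Real.sqrt 2 →
      volume (square s ∩ Metric.closedBall (0 : EuclideanSpace ℝ (Fin 2)) r)
        = ENNReal.ofReal
            (π * r ^ 2 - 4 * r ^ 2 * Real.arccos (s / (2 * r))
              + s * Real.sqrt (4 * r ^ 2 - s ^ 2))) ∧
    (s / Real.sqrt 2 ≤ r →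
      volume (square s ∩ Metric.closedBall (0 : EuclideanSpace ℝ (Fin 2)) r)
        = ENNReal.ofReal (s ^ 2)) := by
  refine ⟨fun h => ?_, fun h₁ h₂ => ?_, fun h => ?_⟩
  · rw [inter_eq_right.2 (closedBall_subset_square h), EuclideanSpace.volume_closedBall_fin_two,
      ← ENNReal.ofReal_pow hr, ← ENNReal.ofReal_mul (by positivity), mul_comm]
  · have hrs : r ^ 2 ≤ 2 * (s / 2) ^ 2 := by
      have := pow_le_pow_left₀ hr h₂ 2
      rw [div_pow, sq_sqrt zero_le_two] at this
      linarith
    have hsqrt : √(4 * r ^ 2 - s ^ 2) = 2 * √(r ^ 2 - (s / 2) ^ 2) := by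
      rw [show 4 * r ^ 2 - s ^ 2 = 2 ^ 2 * (r ^ 2 - (s / 2) ^ 2) by ring, sqrt_mul (by norm_num),
        sqrt_sq zero_le_two]
    rw [volume_square_inter_closedBall hs.le h₁,
      integral_two_mul_min_sqrt_sq_sub_sq (by positivity) h₁ hrs, hsqrt, div_div]
    ring_nf
  · have hsr : s ^ 2 ≤ 2 * r ^ 2 := by
      have := pow_le_pow_left₀ (by positivity) h 2
      rw [div_pow, sq_sqrt zero_le_two] at this
      linarith
    rw [inter_eq_left.2 (square_subset_closedBall hr hsr), volume_square hs.le]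
end

section
/- The function g(r) := r²·arccos(1/r) − √(r² − 1) is convex on the interval [1, √2]. -/
open Real

lemma aux_sqrt_eq {r : ℝ} (hr : 1 < r) :
    Real.sqrt (1 - (1 / r) ^ 2) = Real.sqrt (r ^ 2 - 1) / r := by
  have hr0 : 0 < r := lt_trans one_pos hr
  rw [show (1 : ℝ) - (1 / r) ^ 2 = (r ^ 2 - 1) / r ^ 2 by field_simp,
    Real.sqrt_div (by nlinarith), Real.sqrt_sq hr0.le]

lemma hasDerivAt_g {r : ℝ} (hr : 1 < r) :
    HasDerivAt (fun r : ℝ => r ^ 2 * Real.arccos (1 / r) - Real.sqrt (r ^ 2 - 1))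
      (2 * r * Real.arccos (1 / r)) r := by
  have hr0 : 0 < r := lt_trans one_pos hr
  have hinv01 : 0 < 1 / r := by positivity
  have hinvlt : 1 / r < 1 := by rw [div_lt_one hr0]; exact hr
  have h1 : (1 : ℝ) / r ≠ 1 := ne_of_lt hinvlt
  have h2 : (1 : ℝ) / r ≠ -1 := by linarith
  have hinv : HasDerivAt (fun x : ℝ => 1 / x) (-(1 / r ^ 2)) r := by
    simpa [one_div] using hasDerivAt_inv hr0.ne'
  have harccos := (Real.hasDerivAt_arccos h2 h1).comp r hinv
  have hpow := hasDerivAt_pow 2 r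
  have hsqne : r ^ 2 - 1 ≠ 0 := by nlinarith
  have hsqrt := ((hasDerivAt_pow 2 r).sub_const 1).sqrt hsqne
  have hall := (hpow.mul harccos).sub hsqrt
  convert hall using 1
  iterate 3 rfl
  have hspos : 0 < Real.sqrt (r ^ 2 - 1) := Real.sqrt_pos.mpr (by nlinarith)
  rw [aux_sqrt_eq hr, Function.comp_apply]
  field_simp
  ring

/-- `g(r) = r² arccos(1/r) − √(r² − 1)` is convex on `[1, √2]`. -/
theorem convexOn_assoc_integrand :
    ConvexOn ℝ (Set.Icc (1 : ℝ) (Real.sqrt 2))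
      (fun r : ℝ => r ^ 2 * Real.arccos (1 / r) - Real.sqrt (r ^ 2 - 1)) := by
  apply MonotoneOn.convexOn_of_deriv (convex_Icc _ _)
  · apply ContinuousOn.sub
    · exact (continuousOn_pow 2).mul (Real.continuous_arccos.comp_continuousOn
        (continuousOn_const.div continuousOn_id fun x hx =>
          ne_of_gt (lt_of_lt_of_le one_pos hx.1)))
    · exact ((continuousOn_pow 2).sub continuousOn_const).sqrt
  · rw [interior_Icc]
    intro r hr
    exact (hasDerivAt_g hr.1).differentiableAt.differentiableWithinAt
  · rw [interior_Icc]
    intro a ha b hb hab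
    rw [(hasDerivAt_g ha.1).deriv, (hasDerivAt_g hb.1).deriv]
    have ha0 : 0 < a := lt_trans one_pos ha.1
    have hb0 : 0 < b := lt_trans one_pos hb.1
    have harc : Real.arccos (1 / a) ≤ Real.arccos (1 / b) := by
      unfold Real.arccos
      have : (1 : ℝ) / b ≤ 1 / a := one_div_le_one_div_of_le ha0 hab
      linarith [Real.monotone_arcsin this]
    exact mul_le_mul (by linarith) harc (Real.arccos_nonneg _) (by linarith)
end

section
/- For every r ∈ [1, √2], g(r) ≤ ((π/2 − 1)/(√2 − 1))·(r − 1), where g(r) := r²·arccos(1/r) − √(r² − 1). (Note g(1) = 0 and g(√2) = π/2 − 1, so the right-hand side is the secant line of g through its endpoint values on [1, √2].) -/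
/-! The derivative of `g` on `(1, ∞)` is `2 r arccos (1 / r)`, a product of two nonnegative
increasing functions, so `g` is convex on `[1, ∞)` and lies below its chord over `[1, √2]`. -/

open Real Set

theorem ConvexOn.le_secant {𝕜 : Type*} [Field 𝕜] [LinearOrder 𝕜] [IsStrictOrderedRing 𝕜]
    {s : Set 𝕜} {f : 𝕜 → 𝕜} (hf : ConvexOn 𝕜 s f) {a b x : 𝕜} (ha : a ∈ s) (hb : b ∈ s)
    (hx : x ∈ Icc a b) : f x ≤ f a + (f b - f a) / (b - a) * (x - a) := by
  rcases hx.1.eq_or_lt with rfl | hax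
  · simp
  have hslope := hf.secant_mono ha (hf.1.ordConnected.out ha hb hx) hb hax.ne'
    (hax.trans_le hx.2).ne' hx.2
  have hxa : 0 < x - a := sub_pos.2 hax
  calc f x = f a + (f x - f a) / (x - a) * (x - a) := by field_simp; ring
    _ ≤ f a + (f b - f a) / (b - a) * (x - a) := by gcongr

noncomputable def assocIntegrand (r : ℝ) : ℝ := r ^ 2 * arccos (1 / r) - √(r ^ 2 - 1)

theorem assocIntegrand_one : assocIntegrand 1 = 0 := by
  simp [assocIntegrand]

theorem assocIntegrand_sqrt_two : assocIntegrand √2 = π / 2 - 1 := by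
  have harccos : arccos (√2)⁻¹ = π / 4 := by
    rw [← sqrt_div_self, ← cos_pi_div_four, arccos_cos (by positivity) (by linarith [pi_pos])]
  simp [assocIntegrand, harccos]
  ring

theorem hasDerivAt_assocIntegrand {r : ℝ} (hr : 1 < r) :
    HasDerivAt assocIntegrand (2 * r * arccos (1 / r)) r := by
  have hr0 : 0 < r := one_pos.trans hr
  have hinv : HasDerivAt (fun x : ℝ => 1 / x) (-(1 / r ^ 2)) r := by
    simpa using hasDerivAt_inv hr0.ne'
  have harccos := (hasDerivAt_arccos (by linarith [one_div_pos.2 hr0])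
    ((div_lt_one hr0).2 hr).ne).comp r hinv
  have hsqrt := ((hasDerivAt_pow 2 r).sub_const 1).sqrt (by nlinarith)
  refine (((hasDerivAt_pow 2 r).mul harccos).sub hsqrt).congr_deriv ?_
  have hsqrt_inv : √(1 - (1 / r) ^ 2) = √(r ^ 2 - 1) / r := by
    rw [show 1 - (1 / r) ^ 2 = (r ^ 2 - 1) / r ^ 2 by field_simp,
      sqrt_div' _ (sq_nonneg r), sqrt_sq hr0.le]
  have hsqrt_pos : 0 < √(r ^ 2 - 1) := sqrt_pos.2 (by nlinarith)
  rw [Function.comp_apply, hsqrt_inv]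
  field_simp
  ring

theorem convexOn_assocIntegrand : ConvexOn ℝ (Ici 1) assocIntegrand := by
  have hcont : ContinuousOn assocIntegrand (Ici 1) := by
    unfold assocIntegrand
    fun_prop (disch := intro x hx; exact (zero_lt_one.trans_le hx).ne')
  have hmono : MonotoneOn (fun r : ℝ => 2 * r * arccos (1 / r)) (Ioi 1) := by
    intro a (ha : 1 < a) b _ hab
    exact mul_le_mul (by linarith) (antitone_arccos (one_div_le_one_div_of_le (by linarith) hab))
      (arccos_nonneg _) (by linarith)
  refine MonotoneOn.convexOn_of_deriv (convex_Ici 1) hcont ?_ ?_ <;> rw [interior_Ici]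
  · exact fun r hr => (hasDerivAt_assocIntegrand hr).differentiableAt.differentiableWithinAt
  · exact hmono.congr fun r hr => (hasDerivAt_assocIntegrand hr).deriv.symm

/-- for `r ∈ [1, √2]`, `g(r) ≤ ((π/2 − 1)/(√2 − 1))·(r − 1)`, where
`g(r) = r² arccos(1/r) − √(r² − 1)`. -/
theorem assoc_integrand_le_secant (r : ℝ) (hr : r ∈ Set.Icc (1 : ℝ) (Real.sqrt 2)) :
    r ^ 2 * Real.arccos (1 / r) - Real.sqrt (r ^ 2 - 1)
      ≤ (π / 2 - 1) / (Real.sqrt 2 - 1) * (r - 1) := by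
  have hchord := convexOn_assocIntegrand.le_secant self_mem_Ici one_lt_sqrt_two.le hr
  rw [assocIntegrand_one, assocIntegrand_sqrt_two, zero_add, sub_zero] at hchord
  exact hchord
end
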